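/- arXiv:1712.08328 — 6 statements merged into one kernel-verified Lean document; each statement's English description precedes it below -/
import Mathlib

section
/- If x ∈ ℝⁿ satisfies Σᵢ xᵢ = n and ‖x − e‖ ≤ √(n/(n−1)), then x ≥ 0 componentwise, i.e. x lies in the standard simplex. Hence the ball of radius r = √(n/(n−1)) centred at e, intersected with the hyperplane Σᵢ xᵢ = n, is contained in the standard simplex. -/
open Finset

-- Cauchy–Schwarz applied to `y j = -∑_{i ≠ j} y i`.
theorem card_mul_sq_le_of_sum_eq_zero {ι : Type*} [Fintype ι] {y : ι → ℝ}
    (hy : ∑ i, y i = 0) (j : ι) :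
    Fintype.card ι * y j ^ 2 ≤ (Fintype.card ι - 1) * ∑ i, y i ^ 2 := by
  classical
  set s := univ.erase j
  have hs : (#s : ℝ) = Fintype.card ι - 1 := by
    have : Nonempty ι := ⟨j⟩
    rw [card_erase_of_mem (mem_univ j), card_univ, Nat.cast_pred Fintype.card_pos]
  have hyj : y j = -∑ i ∈ s, y i := by
    linarith [add_sum_erase univ y (mem_univ j)]
  have hcs : y j ^ 2 ≤ (Fintype.card ι - 1) * ∑ i ∈ s, y i ^ 2 := by
    rw [hyj, neg_sq, ← hs]
    exact sq_sum_le_card_mul_sum_sq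
  rw [← add_sum_erase univ (fun i ↦ y i ^ 2) (mem_univ j)]
  linarith

theorem neg_one_le_of_sum_eq_zero_of_sum_sq_le {ι : Type*} [Fintype ι] {y : ι → ℝ}
    (hy : ∑ i, y i = 0)
    (hsq : ∑ i, y i ^ 2 ≤ Fintype.card ι / (Fintype.card ι - 1)) (j : ι) :
    -1 ≤ y j := by
  have hcard : (1 : ℝ) ≤ Fintype.card ι := by exact_mod_cast Fintype.card_pos_iff.mpr ⟨j⟩
  -- `(N - 1) * (N / (N - 1)) ≤ N` also in the degenerate case `N = 1`, where `1 / 0 = 0`.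
  have hmul : (Fintype.card ι - 1 : ℝ) * (Fintype.card ι / (Fintype.card ι - 1))
      ≤ Fintype.card ι := by
    rcases (sub_nonneg.mpr hcard).eq_or_lt with h | h
    · rw [← h, zero_mul]; positivity
    · rw [mul_div_cancel₀ _ h.ne']
  have hyj : Fintype.card ι * y j ^ 2 ≤ Fintype.card ι * 1 := calc
    _ ≤ (Fintype.card ι - 1) * ∑ i, y i ^ 2 := card_mul_sq_le_of_sum_eq_zero hy j
    _ ≤ (Fintype.card ι - 1) * (Fintype.card ι / (Fintype.card ι - 1)) := by gcongr
    _ ≤ _ := by rw [mul_one]; exact hmul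
  have hsq_le : y j ^ 2 ≤ 1 := le_of_mul_le_mul_left hyj (by linarith)
  nlinarith

theorem karmarkar_inner_sphere_in_simplex_general (n : ℕ)
    (e : EuclideanSpace ℝ (Fin n)) (he : ∀ i, e i = 1)
    (x : EuclideanSpace ℝ (Fin n)) (hsum : ∑ i, x i = n)
    (hball : ‖x - e‖ ≤ Real.sqrt (n / (n - 1))) :
    ∀ i, 0 ≤ x i := by
  intro j
  have hn : (1 : ℝ) ≤ n := by exact_mod_cast j.pos
  have hy : ∑ i, (x - e) i = 0 := by simp [he, hsum]
  have hsq : ∑ i, (x - e) i ^ 2 ≤ n / (n - 1) := by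
    have := (Real.le_sqrt (norm_nonneg _) (by bound)).mp hball
    simpa [EuclideanSpace.norm_sq_eq] using this
  have hyj := neg_one_le_of_sum_eq_zero_of_sum_sq_le hy (by simpa using hsq) j
  simp only [PiLp.sub_apply, he] at hyj
  linarith

/-- If `x` lies on the hyperplane `∑ i, x i = n` and within Euclidean distance
`r = √(n/(n-1))` of the all-ones vector `e`, then `x ≥ 0` componentwise, i.e. `x` lies in
the standard simplex.  Hence the inscribed ball of radius `r` centred at `e`, intersected
with the hyperplane, is contained in the standard simplex. -/
theorem karmarkar_inner_sphere_in_simplex (n : ℕ) (hn : 2 ≤ n)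
    (e : EuclideanSpace ℝ (Fin n)) (he : ∀ i, e i = 1)
    (x : EuclideanSpace ℝ (Fin n)) (hsum : ∑ i, x i = n)
    (hball : ‖x - e‖ ≤ Real.sqrt (n / (n - 1))) :
    ∀ i, 0 ≤ x i :=
  karmarkar_inner_sphere_in_simplex_general n e he x hsum hball
end

section
/- Let A be a real m × n matrix with Ae = 0, let c ∈ ℝⁿ, and suppose the minimum of cᵀx over the feasible set {x : Ax = 0, Σᵢ xᵢ = n, x ≥ 0} equals 0. Let R = √(n(n−1)). Then for every ρ with 0 < ρ ≤ R, the minimum of cᵀx over the set {x : Ax = 0, Σᵢ xᵢ = n, ‖x − e‖ ≤ ρ} is at most (1 − ρ/R) · cᵀe. -/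
/-!
Every point of the simplex lies within `R = √(n(n-1))` of its centre `e`, because
`∑ xᵢ² ≤ (∑ xᵢ)² = n²` for `x ≥ 0`. Take an optimal point `x` of cost `0` and move from `e`
towards it by the fraction `ρ / R`. The constraints `Ax = 0` and `∑ xᵢ = n` are affine and hold at
both ends, so they hold at the new point; it lies within `ρ` of `e`; and the cost, being linear
along the line, equals `(1 - ρ/R)⟪c, e⟫ + (ρ/R)·0`.
-/

open Finset AffineMap
open scoped RealInnerProductSpace

section Simplex

variable {ι : Type*} [Fintype ι]

theorem EuclideanSpace.norm_sub_sq_eq_of_forall_eq_one {e : EuclideanSpace ℝ ι}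
    (he : ∀ i, e i = 1) (x : EuclideanSpace ℝ ι) :
    ‖x - e‖ ^ 2 = ∑ i, x i ^ 2 - 2 * ∑ i, x i + Fintype.card ι := by
  rw [EuclideanSpace.norm_sq_eq]
  simp only [PiLp.sub_apply, he, Real.norm_eq_abs, sq_abs, sub_sq, one_pow, mul_one,
    sum_add_distrib, sum_sub_distrib, ← mul_sum, sum_const, card_univ, nsmul_eq_mul]

theorem EuclideanSpace.norm_sub_le_sqrt_of_nonneg_of_sum_eq_card {e : EuclideanSpace ℝ ι}
    (he : ∀ i, e i = 1) {x : EuclideanSpace ℝ ι} (hx : ∀ i, 0 ≤ x i)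
    (hsum : ∑ i, x i = Fintype.card ι) :
    ‖x - e‖ ≤ √(Fintype.card ι * (Fintype.card ι - 1)) := by
  refine Real.le_sqrt_of_sq_le ?_
  have hsq := sum_sq_le_sq_sum_of_nonneg (s := univ) fun i _ => hx i
  rw [norm_sub_sq_eq_of_forall_eq_one he, hsum] at *
  linarith

end Simplex

theorem dist_lineMap_div_left_le {V P : Type*} [NormedAddCommGroup V] [NormedSpace ℝ V]
    [MetricSpace P] [NormedAddTorsor V P] {p q : P} {R ρ : ℝ} (hρ : 0 ≤ ρ)
    (hpq : dist p q ≤ R) :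
    dist (lineMap p q (ρ / R)) p ≤ ρ := by
  have hR : 0 ≤ R := dist_nonneg.trans hpq
  rw [dist_lineMap_left, Real.norm_of_nonneg (by positivity)]
  calc ρ / R * dist p q ≤ ρ / R * R := by gcongr
    _ ≤ ρ := by
      rcases hR.eq_or_lt with rfl | hR
      · simpa using hρ
      · rw [div_mul_cancel₀ _ hR.ne']

theorem karmarkar_sphere_min_bound_general (n : ℕ) (m : ℕ)
    (A : Matrix (Fin m) (Fin n) ℝ) (c : EuclideanSpace ℝ (Fin n))
    (e : EuclideanSpace ℝ (Fin n)) (he : ∀ i, e i = 1)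
    (hAe : A.mulVec e = 0)
    (hopt : IsLeast {v : ℝ | ∃ x : EuclideanSpace ℝ (Fin n),
        A.mulVec x = 0 ∧ (∑ i, x i) = n ∧ (∀ i, 0 ≤ x i) ∧ v = ⟪c, x⟫} 0)
    (R : ℝ) (hR : R = Real.sqrt (n * (n - 1)))
    (ρ : ℝ) (hρ0 : 0 < ρ) :
    ∃ x : EuclideanSpace ℝ (Fin n),
      A.mulVec x = 0 ∧ (∑ i, x i) = n ∧ ‖x - e‖ ≤ ρ ∧
      ⟪c, x⟫ ≤ (1 - ρ / R) * ⟪c, e⟫ := by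
  obtain ⟨x, hAx, hsum, hx, hcx⟩ := hopt.1
  have hxR : dist e x ≤ R := by
    simpa [hR, dist_eq_norm'] using
      EuclideanSpace.norm_sub_le_sqrt_of_nonneg_of_sum_eq_card he hx (by simpa using hsum)
  have hsum_e : ∑ i, e i = n := by simp [he]
  refine ⟨lineMap e x (ρ / R), ?_, ?_, ?_, le_of_eq ?_⟩
  · simp [lineMap_apply_module, Matrix.mulVec_add, Matrix.mulVec_smul, hAx, hAe]
  · simp only [lineMap_apply_module, PiLp.add_apply, PiLp.smul_apply, smul_eq_mul,
      sum_add_distrib, ← mul_sum, hsum, hsum_e]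
    ring
  · simpa [dist_eq_norm] using dist_lineMap_div_left_le hρ0.le hxR
  · simp [lineMap_apply_module, inner_add_right, real_inner_smul_right, ← hcx]

/-- Karmarkar's improvement bound: if `Ae = 0` and the minimum of `⟪c, x⟫` over the
feasible set `{x : Ax = 0, ∑ i x i = n, x ≥ 0}` equals `0`, then for every radius
`0 < ρ ≤ R = √(n(n-1))` there is a point of the feasible region of the ball subproblem
`{x : Ax = 0, ∑ i x i = n, ‖x - e‖ ≤ ρ}` whose cost is at most `(1 - ρ/R)·⟪c, e⟫`;
hence the minimum over that set is at most `(1 - ρ/R)·⟪c, e⟫`. -/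
theorem karmarkar_sphere_min_bound (n : ℕ) (hn : 2 ≤ n) (m : ℕ)
    (A : Matrix (Fin m) (Fin n) ℝ) (c : EuclideanSpace ℝ (Fin n))
    (e : EuclideanSpace ℝ (Fin n)) (he : ∀ i, e i = 1)
    (hAe : A.mulVec e = 0)
    (hopt : IsLeast {v : ℝ | ∃ x : EuclideanSpace ℝ (Fin n),
        A.mulVec x = 0 ∧ (∑ i, x i) = n ∧ (∀ i, 0 ≤ x i) ∧ v = ⟪c, x⟫} 0)
    (R : ℝ) (hR : R = Real.sqrt (n * (n - 1)))
    (ρ : ℝ) (hρ0 : 0 < ρ) (hρR : ρ ≤ R) :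
    ∃ x : EuclideanSpace ℝ (Fin n),
      A.mulVec x = 0 ∧ (∑ i, x i) = n ∧ ‖x - e‖ ≤ ρ ∧
      ⟪c, x⟫ ≤ (1 - ρ / R) * ⟪c, e⟫ :=
  karmarkar_sphere_min_bound_general n m A c e he hAe hopt R hR ρ hρ0
end

section
/- Let a, b, c ∈ ℝ with a² = b² + c², and let x > 0 be such that −|a|x > −1 (hence also bx > −1 and cx > −1). Then Ψ(−|a|x) ≥ Ψ(bx) + Ψ(cx), where Ψ(t) = t − log(1 + t). -/
/-!
With `Ψ(t) = t - log (1 + t)` one has `d/dx Ψ(k x) = k² x / (1 + k x)`. Hence for `k ≥ -m`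
the function `x ↦ k² Ψ(-m x) - m² Ψ(k x)` has derivative
`k² m² x (1 / (1 - m x) - 1 / (1 + k x)) ≥ 0` and vanishes at `0`, so
`m² Ψ(k x) ≤ k² Ψ(-m x)` (this is the monotonicity of `Ψ(t) / t²`). Applied with `m = |a|` and
`k = b, c` and added up, `a² = b² + c²` gives `a² (Ψ(b x) + Ψ(c x)) ≤ a² Ψ(-|a| x)`.
-/

open Real Set

noncomputable def psi (t : ℝ) : ℝ := t - log (1 + t)

lemma psi_zero : psi 0 = 0 := by simp [psi]

lemma hasDerivAt_psi {t : ℝ} (ht : 1 + t ≠ 0) : HasDerivAt psi (t / (1 + t)) t := by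
  refine ((hasDerivAt_id t).sub (((hasDerivAt_id t).const_add 1).log ht)).congr_deriv ?_
  simp only [id, one_div]
  field_simp
  ring

lemma hasDerivAt_psi_mul {k x : ℝ} (hkx : 1 + k * x ≠ 0) :
    HasDerivAt (fun y => psi (k * y)) (k ^ 2 * x / (1 + k * x)) x := by
  refine ((hasDerivAt_psi hkx).comp x ((hasDerivAt_id x).const_mul k)).congr_deriv ?_
  ring

lemma sq_mul_psi_mul_le_sq_mul_psi_neg_mul {m k x : ℝ} (hk : -m ≤ k) (hx : 0 ≤ x) (hmx : m * x < 1) :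
    m ^ 2 * psi (k * x) ≤ k ^ 2 * psi (-m * x) := by
  have hpos : ∀ t ∈ Icc 0 x, 0 < 1 - m * t ∧ 1 - m * t ≤ 1 + k * t := by
    rintro t ⟨ht0, htx⟩
    refine ⟨?_, by nlinarith⟩
    rcases le_total 0 m with hm | hm <;> nlinarith
  have hderiv : ∀ t ∈ Icc 0 x, HasDerivAt (fun y => k ^ 2 * psi (-m * y) - m ^ 2 * psi (k * y))
      (k ^ 2 * ((-m) ^ 2 * t / (1 + -m * t)) - m ^ 2 * (k ^ 2 * t / (1 + k * t))) t := by
    intro t ht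
    obtain ⟨h₁, h₂⟩ := hpos t ht
    exact ((hasDerivAt_psi_mul (by linarith)).const_mul _).sub
      ((hasDerivAt_psi_mul (by linarith)).const_mul _)
  have hmono : MonotoneOn (fun y => k ^ 2 * psi (-m * y) - m ^ 2 * psi (k * y)) (Icc 0 x) := by
    refine monotoneOn_of_hasDerivWithinAt_nonneg (convex_Icc 0 x)
      (fun t ht => (hderiv t ht).continuousAt.continuousWithinAt)
      (fun t ht => (hderiv t (interior_subset ht)).hasDerivWithinAt) fun t ht => ?_
    obtain ⟨h₁, h₂⟩ := hpos t (interior_subset ht)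
    have ht0 : 0 ≤ t := (interior_subset ht).1
    have hgap : 0 ≤ 1 / (1 - m * t) - 1 / (1 + k * t) :=
      sub_nonneg.2 (one_div_le_one_div_of_le h₁ h₂)
    calc (0 : ℝ) ≤ k ^ 2 * m ^ 2 * t * (1 / (1 - m * t) - 1 / (1 + k * t)) := by positivity
      _ = _ := by ring
  have := hmono (left_mem_Icc.2 hx) (right_mem_Icc.2 hx) hx
  simp only [mul_zero, psi_zero, sub_zero] at this
  linarith

/-- For `Ψ(t) = t - log(1 + t)`: if `a² = b² + c²`, `x > 0`, and `-|a|·x > -1`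
(hence also `b·x > -1` and `c·x > -1`), then `Ψ(-|a|·x) ≥ Ψ(b·x) + Ψ(c·x)`. -/
theorem psi_superadditive_pair (a b c x : ℝ) (habc : a ^ 2 = b ^ 2 + c ^ 2)
    (hx : 0 < x) (h : -1 < -|a| * x) :
    (b * x - Real.log (1 + b * x)) + (c * x - Real.log (1 + c * x)) ≤
      -|a| * x - Real.log (1 + -|a| * x) := by
  change psi (b * x) + psi (c * x) ≤ psi (-|a| * x)
  have hbc : b ^ 2 + c ^ 2 = |a| ^ 2 := by rw [sq_abs, habc]
  have hax : |a| * x < 1 := by linarith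
  have hb := sq_mul_psi_mul_le_sq_mul_psi_neg_mul
    (abs_le_of_sq_le_sq' (b := |a|) (a := b) (by nlinarith) (abs_nonneg a)).1 hx.le hax
  have hc := sq_mul_psi_mul_le_sq_mul_psi_neg_mul
    (abs_le_of_sq_le_sq' (b := |a|) (a := c) (by nlinarith) (abs_nonneg a)).1 hx.le hax
  rcases (abs_nonneg a).eq_or_lt with ha | ha
  · obtain ⟨rfl, rfl⟩ : b = 0 ∧ c = 0 := by
      constructor <;> nlinarith [sq_nonneg b, sq_nonneg c]
    simp [← ha, psi_zero]
  · refine le_of_mul_le_mul_left ?_ (pow_pos ha 2)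
    calc |a| ^ 2 * (psi (b * x) + psi (c * x)) ≤ (b ^ 2 + c ^ 2) * psi (-|a| * x) := by linarith
      _ = |a| ^ 2 * psi (-|a| * x) := by rw [hbc]
end

section
/- Let a, b₁, …, b_s ∈ ℝ with a² = b₁² + b₂² + ⋯ + b_s², and let x > 0 be such that −|a|x > −1 (hence each bᵢx > −1). Then Ψ(−|a|x) ≥ Ψ(b₁x) + Ψ(b₂x) + ⋯ + Ψ(b_sx), where Ψ(t) = t − log(1 + t). -/
/-!
For `|t| < 1`, `Ψ(t) = t - log (1 + t) = ∑_{n ≥ 2} (-t)ⁿ / n`. With `u = |a| x`, the numbers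
`cᵢ = bᵢ x` satisfy `∑ cᵢ² = u²`, hence `|cᵢ| ≤ u`, so termwise
`∑ᵢ (-cᵢ)ⁿ ≤ ∑ᵢ cᵢ² uⁿ⁻² = uⁿ`, which is the `n`-th coefficient of the series of `Ψ(-u)`.
-/

open Finset

theorem Real.hasSum_pow_div_sub_log_one_add {t : ℝ} (ht : |t| < 1) :
    HasSum (fun n : ℕ => (-t) ^ (n + 2) / (n + 2)) (t - Real.log (1 + t)) := by
  have hlog := Real.hasSum_pow_div_log_of_abs_lt_one (x := -t) (by rwa [abs_neg])
  rw [sub_neg_eq_add] at hlog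
  have hshift := (hasSum_nat_add_iff' 1).mpr hlog
  simp only [range_one, sum_singleton, zero_add, pow_one, Nat.cast_zero, div_one] at hshift
  have hterm : (fun n : ℕ => (-t) ^ (n + 2) / (n + 2)) =
      fun n : ℕ => (-t) ^ (n + 1 + 1) / ((n + 1 : ℕ) + 1) := by
    funext n
    push_cast
    ring
  rwa [hterm, show t - Real.log (1 + t) = -Real.log (1 + t) - -t by ring]

theorem neg_pow_add_two_le_sq_mul_pow {t u : ℝ} (htu : |t| ≤ u) (n : ℕ) :
    (-t) ^ (n + 2) ≤ t ^ 2 * u ^ n :=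
  calc (-t) ^ (n + 2) ≤ |t| ^ (n + 2) := by rw [← abs_neg t, pow_abs]; exact le_abs_self _
    _ = t ^ 2 * |t| ^ n := by rw [pow_add, sq_abs, mul_comm]
    _ ≤ t ^ 2 * u ^ n := by gcongr

theorem abs_le_of_sum_sq_eq_sq {ι : Type*} [Fintype ι] {c : ι → ℝ} {u : ℝ} (hu : 0 ≤ u)
    (hc : ∑ i, c i ^ 2 = u ^ 2) (i : ι) : |c i| ≤ u := by
  rw [← abs_of_nonneg hu, ← sq_le_sq, ← hc]
  exact single_le_sum (fun j _ => sq_nonneg (c j)) (mem_univ i)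

theorem sum_sub_log_one_add_le_of_sum_sq_eq_sq {ι : Type*} [Fintype ι] {c : ι → ℝ} {u : ℝ}
    (hu₀ : 0 ≤ u) (hu₁ : u < 1) (hc : ∑ i, c i ^ 2 = u ^ 2) :
    ∑ i, (c i - Real.log (1 + c i)) ≤ -u - Real.log (1 + -u) := by
  have hcu := abs_le_of_sum_sq_eq_sq hu₀ hc
  have hsum := hasSum_sum (s := univ) fun i _ ↦ Real.hasSum_pow_div_sub_log_one_add ((hcu i).trans_lt hu₁)
  have hneg := Real.hasSum_pow_div_sub_log_one_add (t := -u) (by rwa [abs_neg, abs_of_nonneg hu₀])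
  refine hasSum_le (fun n ↦ ?_) hsum hneg
  rw [← sum_div, neg_neg]
  gcongr
  calc ∑ i, (-c i) ^ (n + 2) ≤ ∑ i, c i ^ 2 * u ^ n :=
        sum_le_sum fun i _ ↦ neg_pow_add_two_le_sq_mul_pow (hcu i) n
    _ = u ^ (n + 2) := by rw [← sum_mul, hc, pow_add, mul_comm]

/-- For `Ψ(t) = t - log(1 + t)`: if `a² = b₁² + ⋯ + b_s²`, `x > 0`, and `-|a|·x > -1`
(hence each `bᵢ·x > -1`), then `Ψ(-|a|·x) ≥ ∑ i, Ψ(bᵢ·x)`. -/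
theorem psi_superadditive (s : ℕ) (a : ℝ) (b : Fin s → ℝ) (x : ℝ)
    (hab : a ^ 2 = ∑ i, b i ^ 2) (hx : 0 < x) (h : -1 < -|a| * x) :
    ∑ i, (b i * x - Real.log (1 + b i * x)) ≤
      -|a| * x - Real.log (1 + -|a| * x) := by
  rw [neg_mul] at h ⊢
  refine sum_sub_log_one_add_le_of_sum_sq_eq_sq (by positivity) (by linarith) ?_
  simp only [mul_pow, ← sum_mul, ← hab, sq_abs]
end

section
/- Let p ∈ ℝⁿ be a unit vector (Σᵢ pᵢ² = 1) with Σᵢ pᵢ = 0, and let 0 < t < 1. Then 1 − t·pᵢ > 0 for every i, and −Σᵢ log(1 − t·pᵢ) ≤ −t − log(1 − t) = Ψ(−t). Equivalently, for z = e − t·p one has z > 0 componentwise, Σᵢ zᵢ = n, and Σᵢ log zᵢ ≥ −Ψ(−t). -/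
/-!
With `g x = -x - log (1 - x) = ∑_{k ≥ 2} x^k / k`, every coefficient of `g` is positive, so
`g x ≤ (x / t)^2 g t` whenever `|x| ≤ t < 1`. Taking `x = t pᵢ` and summing, the linear terms
cancel because `∑ pᵢ = 0`, and `∑ (t pᵢ / t)^2 = ∑ pᵢ^2 = 1`.
-/

open Finset

lemma hasSum_pow_add_two_div_of_abs_lt_one {x : ℝ} (hx : |x| < 1) :
    HasSum (fun k : ℕ => x ^ (k + 2) / (k + 2)) (-Real.log (1 - x) - x) := by
  have h := (hasSum_nat_add_iff' (f := fun k : ℕ => x ^ (k + 1) / (k + 1)) 1).2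
    (Real.hasSum_pow_div_log_of_abs_lt_one hx)
  norm_num [add_assoc, one_add_one_eq_two] at h
  exact h

lemma neg_log_one_sub_sub_le_of_abs_le {x t : ℝ} (ht0 : 0 < t) (ht1 : t < 1) (hx : |x| ≤ t) :
    -Real.log (1 - x) - x ≤ (x / t) ^ 2 * (-Real.log (1 - t) - t) := by
  have hgx := hasSum_pow_add_two_div_of_abs_lt_one (hx.trans_lt ht1)
  have hgt := (hasSum_pow_add_two_div_of_abs_lt_one (abs_of_pos ht0 ▸ ht1)).mul_left ((x / t) ^ 2)
  refine hasSum_le (fun k => ?_) hgx hgt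
  have hnum : x ^ (k + 2) ≤ (x / t) ^ 2 * t ^ (k + 2) :=
    calc x ^ (k + 2) ≤ x ^ 2 * |x| ^ k := by
          rw [pow_add, mul_comm]
          exact mul_le_mul_of_nonneg_left ((le_abs_self _).trans_eq (abs_pow x k)) (sq_nonneg x)
      _ ≤ x ^ 2 * t ^ k := by gcongr
      _ = (x / t) ^ 2 * t ^ (k + 2) := by field_simp; ring
  rw [mul_div_assoc']
  gcongr

lemma neg_sum_log_one_sub_mul_le {ι : Type*} [Fintype ι] {p : ι → ℝ} (hp0 : ∑ i, p i = 0)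
    (hp1 : ∀ i, |p i| ≤ 1) {t : ℝ} (ht0 : 0 < t) (ht1 : t < 1) :
    -∑ i, Real.log (1 - t * p i) ≤ (∑ i, p i ^ 2) * (-t - Real.log (1 - t)) := by
  have htp : ∀ i, |t * p i| ≤ t := fun i => by
    rw [abs_mul, abs_of_pos ht0]; exact mul_le_of_le_one_right ht0.le (hp1 i)
  calc -∑ i, Real.log (1 - t * p i) = ∑ i, (-Real.log (1 - t * p i) - t * p i) := by
        rw [sum_sub_distrib, ← mul_sum, hp0, sum_neg_distrib, mul_zero, sub_zero]
    _ ≤ ∑ i, (t * p i / t) ^ 2 * (-Real.log (1 - t) - t) :=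
        sum_le_sum fun i _ => neg_log_one_sub_sub_le_of_abs_le ht0 ht1 (htp i)
    _ = (∑ i, p i ^ 2) * (-t - Real.log (1 - t)) := by
        rw [← sum_mul, neg_sub_comm]
        simp only [mul_div_cancel_left₀ _ ht0.ne']

theorem sum_log_z_bound_general (n : ℕ) (p : Fin n → ℝ)
    (hp : ∑ i, p i ^ 2 = 1) (hp0 : ∑ i, p i = 0)
    (t : ℝ) (ht0 : 0 < t) (ht1 : t < 1) :
    (∀ i, 0 < 1 - t * p i) ∧
    (-∑ i, Real.log (1 - t * p i) ≤ -t - Real.log (1 - t)) ∧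
    (∑ i, (1 - t * p i) = n) ∧
    (∑ i, Real.log (1 - t * p i) ≥ -(-t - Real.log (1 + -t))) := by
  have hp1 : ∀ i, |p i| ≤ 1 := fun i => (sq_le_one_iff_abs_le_one (p i)).1 <|
    hp ▸ single_le_sum (fun j _ => sq_nonneg (p j)) (mem_univ i)
  have hpos : ∀ i, 0 < 1 - t * p i := fun i => by
    have := (abs_le.1 (hp1 i)).2
    nlinarith
  have hlog := neg_sum_log_one_sub_mul_le hp0 hp1 ht0 ht1
  rw [hp, one_mul] at hlog
  refine ⟨hpos, hlog, ?_, ?_⟩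
  · simp [sum_sub_distrib, ← mul_sum, hp0]
  · rw [← sub_eq_add_neg]
    linarith

/-- Let `p` be a unit vector (`∑ i, pᵢ² = 1`) with `∑ i, pᵢ = 0`, and `0 < t < 1`.
Then each `1 - t·pᵢ > 0` and `-∑ i, log (1 - t·pᵢ) ≤ -t - log (1 - t) = Ψ(-t)`.
Equivalently, `z = e - t·p` satisfies `z > 0`, `∑ i, zᵢ = n`, and
`∑ i, log zᵢ ≥ -Ψ(-t)`. -/
theorem sum_log_z_bound (n : ℕ) (hn : 2 ≤ n) (p : Fin n → ℝ)
    (hp : ∑ i, p i ^ 2 = 1) (hp0 : ∑ i, p i = 0)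
    (t : ℝ) (ht0 : 0 < t) (ht1 : t < 1) :
    (∀ i, 0 < 1 - t * p i) ∧
    (-∑ i, Real.log (1 - t * p i) ≤ -t - Real.log (1 - t)) ∧
    (∑ i, (1 - t * p i) = n) ∧
    (∑ i, Real.log (1 - t * p i) ≥ -(-t - Real.log (1 + -t))) :=
  sum_log_z_bound_general n p hp hp0 t ht0 ht1
end

section
/- Let n ≥ 2, r = √(n/(n−1)), R = √(n(n−1)), α = 1/(1 + r). Let p ∈ ℝⁿ be a unit vector with Σᵢ pᵢ = 0 and set z = e − αr·p (so zᵢ = 1 − αr·pᵢ > 0 for every i). Then −n·log(1 − αr/R) + Σᵢ log zᵢ ≥ 1 − log 2. Consequently, for any cost vector c with cᵀz > 0 and cᵀz ≤ (1 − αr/R)·cᵀe, the potential Φ(x) = n·log(cᵀx) − Σᵢ log xᵢ satisfies Φ(e) − Φ(z) ≥ 1 − log 2; i.e. the potential decreases by at least the constant 1 − log 2 in one Karmarkar iteration. -/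
/-!
Put `β = αr = r/(1+r)`, so that `z = e - β·p` and `1 - β = 1/(1+r)`. Comparing the power series of
`-log(1 - x) - x` termwise gives `log(1 - βx) ≥ -βx + x²·(log(1 - β) + β)` for `|x| ≤ 1`; summing
over `x = pᵢ` with `∑ pᵢ = 0`, `∑ pᵢ² = 1` yields `∑ log zᵢ ≥ log(1 - β) + β`. Together with
`-n·log(1 - β/R) ≥ nβ/R = βr` (as `rR = n`), the left-hand side is at least
`βr + β - log(1 + r) = r - log(1 + r)`, which is `≥ 1 - log 2` since `r ≥ 1`.
The potential decrease follows because `cᵀz ≤ (1 - β/R)·cᵀe` bounds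
`n·(log cᵀe - log cᵀz)` below by `-n·log(1 - β/R)`.
-/

open Finset Real

lemma abs_le_one_of_sum_sq_le_one {ι : Type*} [Fintype ι] {p : ι → ℝ}
    (hp : ∑ i, p i ^ 2 ≤ 1) (i : ι) : |p i| ≤ 1 :=
  sq_le_one_iff_abs_le_one _ |>.mp <|
    (single_le_sum (fun j _ => sq_nonneg (p j)) (mem_univ i)).trans hp

lemma hasSum_pow_div_neg_log_one_sub_sub {y : ℝ} (hy : |y| < 1) :
    HasSum (fun m : ℕ => y ^ (m + 2) / (m + 2)) (-log (1 - y) - y) := by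
  have h := (hasSum_nat_add_iff' 1).mpr (hasSum_pow_div_log_of_abs_lt_one hy)
  simp only [range_one, sum_singleton, zero_add, pow_one, Nat.cast_zero, div_one] at h
  convert h using 2 with m
  · rfl
  · push_cast
    ring

lemma neg_mul_add_sq_mul_le_log_one_sub_mul {β x : ℝ} (hβ0 : 0 ≤ β) (hβ1 : β < 1)
    (hx : |x| ≤ 1) : -(β * x) + x ^ 2 * (log (1 - β) + β) ≤ log (1 - β * x) := by
  have hβx : |β * x| < 1 := by
    rw [abs_mul, abs_of_nonneg hβ0]
    nlinarith [abs_nonneg x]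
  have hβ : |β| < 1 := by rwa [abs_of_nonneg hβ0]
  have hle := hasSum_le (fun m => ?_) (hasSum_pow_div_neg_log_one_sub_sub hβx)
    ((hasSum_pow_div_neg_log_one_sub_sub hβ).mul_left (x ^ 2))
  · linarith
  have hxm : x ^ m ≤ 1 :=
    (le_abs_self _).trans ((abs_pow x m).trans_le (pow_le_one₀ (abs_nonneg x) hx))
  calc (β * x) ^ (m + 2) / (m + 2) = x ^ 2 * (β ^ (m + 2) / (m + 2)) * x ^ m := by ring
    _ ≤ x ^ 2 * (β ^ (m + 2) / (m + 2)) := mul_le_of_le_one_right (by positivity) hxm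

lemma log_one_sub_add_le_sum_log_one_sub_mul {ι : Type*} [Fintype ι] {β : ℝ} {p : ι → ℝ}
    (hβ0 : 0 ≤ β) (hβ1 : β < 1) (hp : ∑ i, p i ^ 2 ≤ 1) (hp0 : ∑ i, p i = 0) :
    log (1 - β) + β ≤ ∑ i, log (1 - β * p i) := by
  have hL : log (1 - β) + β ≤ 0 := by
    linarith [log_le_sub_one_of_pos (sub_pos.mpr hβ1)]
  calc log (1 - β) + β ≤ (∑ i, p i ^ 2) * (log (1 - β) + β) := by nlinarith
    _ = ∑ i, (-(β * p i) + p i ^ 2 * (log (1 - β) + β)) := by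
      rw [sum_add_distrib, sum_neg_distrib, ← mul_sum, hp0, sum_mul]
      ring
    _ ≤ ∑ i, log (1 - β * p i) := sum_le_sum fun i _ =>
      neg_mul_add_sq_mul_le_log_one_sub_mul hβ0 hβ1 (abs_le_one_of_sum_sq_le_one hp i)

lemma sqrt_div_mul_sqrt_mul {a b : ℝ} (ha : 0 ≤ a) (hb : 0 < b) :
    √(a / b) * √(a * b) = a := by
  rw [← sqrt_mul (by positivity), show a / b * (a * b) = a ^ 2 by field_simp, sqrt_sq ha]

lemma one_lt_sqrt_div_sub_one {n : ℝ} (hn : 1 < n) : 1 < √(n / (n - 1)) := by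
  rw [lt_sqrt zero_le_one, one_pow, one_lt_div (by linarith)]
  linarith

lemma one_lt_sqrt_mul_sub_one {n : ℝ} (hn : 2 ≤ n) : 1 < √(n * (n - 1)) := by
  rw [lt_sqrt zero_le_one]
  nlinarith

lemma mul_le_neg_mul_log_one_sub {n t : ℝ} (hn : 0 ≤ n) (ht : t < 1) :
    n * t ≤ -n * log (1 - t) := by
  nlinarith [log_le_sub_one_of_pos (sub_pos.mpr ht)]

lemma mul_div_add_log_one_sub_add_eq {n r R α : ℝ} (hr : 0 < 1 + r) (hR : R ≠ 0)
    (hrR : r * R = n) (hα : α = 1 / (1 + r)) :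
    n * (α * r / R) + (log (1 - α * r) + α * r) = r - log (1 + r) := by
  have h1 : 1 - α * r = (1 + r)⁻¹ := by
    rw [hα]
    field_simp
    ring
  rw [h1, log_inv, ← hrR, hα]
  field_simp
  ring

lemma one_sub_log_two_le_sub_log_one_add {r : ℝ} (hr : 1 ≤ r) :
    1 - log 2 ≤ r - log (1 + r) := by
  have h := log_le_sub_one_of_pos (show 0 < (1 + r) / 2 by linarith)
  rw [log_div (by linarith) two_ne_zero] at h
  linarith

lemma neg_log_le_log_sub_log_of_le_mul {a b θ : ℝ} (ha : 0 < a) (hθ : 0 < θ)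
    (h : a ≤ θ * b) : -log θ ≤ log b - log a := by
  have hab : a / θ ≤ b := (div_le_iff₀' hθ).mpr h
  have := log_le_log (div_pos ha hθ) hab
  rw [log_div ha.ne' hθ.ne'] at this
  linarith

/-- One Karmarkar iteration decreases the potential by at least `1 - log 2`.
Let `n ≥ 2`, `r = √(n/(n-1))`, `R = √(n(n-1))`, `α = 1/(1+r)`, let `p` be a unit vector
with `∑ i, pᵢ = 0`, and set `z = e - αr·p`.  Then `z > 0` componentwise,
`-n·log(1 - αr/R) + ∑ i, log zᵢ ≥ 1 - log 2`; consequently, for any cost vector `c` with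
`cᵀz > 0` and `cᵀz ≤ (1 - αr/R)·cᵀe`, the potential
`Φ(x) = n·log(cᵀx) - ∑ i, log xᵢ` satisfies `Φ(e) - Φ(z) ≥ 1 - log 2`. -/
theorem karmarkar_potential_decrease (n : ℕ) (hn : 2 ≤ n)
    (r R α : ℝ) (hr : r = Real.sqrt (n / (n - 1))) (hR : R = Real.sqrt (n * (n - 1)))
    (hα : α = 1 / (1 + r))
    (p : Fin n → ℝ) (hp : ∑ i, p i ^ 2 = 1) (hp0 : ∑ i, p i = 0)
    (z : Fin n → ℝ) (hz : ∀ i, z i = 1 - α * r * p i) :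
    (∀ i, 0 < z i) ∧
    (-(n : ℝ) * Real.log (1 - α * r / R) + ∑ i, Real.log (z i) ≥ 1 - Real.log 2) ∧
    (∀ c : Fin n → ℝ, 0 < ∑ i, c i * z i →
      (∑ i, c i * z i) ≤ (1 - α * r / R) * (∑ i, c i) →
      ((n : ℝ) * Real.log (∑ i, c i) - ∑ _i : Fin n, Real.log (1 : ℝ)) -
        ((n : ℝ) * Real.log (∑ i, c i * z i) - ∑ i, Real.log (z i))
        ≥ 1 - Real.log 2) := by
  have hn2 : (2 : ℝ) ≤ n := by exact_mod_cast hn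
  have hr1 : 1 < r := hr ▸ one_lt_sqrt_div_sub_one (by linarith)
  have hR1 : 1 < R := hR ▸ one_lt_sqrt_mul_sub_one hn2
  have hrR : r * R = n := hr ▸ hR ▸ sqrt_div_mul_sqrt_mul (by linarith) (by linarith)
  set β := α * r with hβ
  have hα0 : 0 < α := by
    rw [hα]
    positivity
  have hβ0 : 0 ≤ β := by positivity
  have hβ1 : β < 1 := by
    rw [hβ, hα, one_div_mul_eq_div, div_lt_one (by linarith)]
    linarith
  have hθ : 0 < 1 - β / R := by
    rw [sub_pos, div_lt_one (by linarith)]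
    linarith
  have hzpos : ∀ i, 0 < z i := fun i => by
    have := abs_le.mp (abs_le_one_of_sum_sq_le_one hp.le i)
    rw [hz]
    nlinarith
  have hlog : log (1 - β) + β ≤ ∑ i, log (z i) := by
    simpa only [hz] using log_one_sub_add_le_sum_log_one_sub_mul hβ0 hβ1 hp.le hp0
  have hdecrease : -(n : ℝ) * log (1 - β / R) + ∑ i, log (z i) ≥ 1 - log 2 := by
    linarith [one_sub_log_two_le_sub_log_one_add hr1.le,
      mul_le_neg_mul_log_one_sub (n := n) (by linarith) (sub_pos.mp hθ),
      mul_div_add_log_one_sub_add_eq (by linarith) (by linarith) hrR hα]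
  refine ⟨hzpos, hdecrease, fun c hcz hc => ?_⟩
  have hcost := mul_le_mul_of_nonneg_left (neg_log_le_log_sub_log_of_le_mul hcz hθ hc)
    (Nat.cast_nonneg (α := ℝ) n)
  simp only [log_one, sum_const_zero, sub_zero]
  linarith
end
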